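/- For all integers a, b, c, d with d nonzero, |a| <= 2, |b| <= 5, |c| <= 11 and |d| <= 57, one has J30(a, b, c, d) != 0. (Consequently there are no rational points of the locus L2 in the weighted projective space with weights (2,4,6,10) whose weighted height max(|a|^{1/2}, |b|^{1/4}, |c|^{1/6}, |d|^{1/10}) is strictly less than 3/2.) -/
import Mathlib

/-- The degree-30 invariant `J₃₀` of the Igusa invariants `J₂, J₄, J₆, J₁₀`,
whose vanishing defines the locus `L₂` of genus two curves with (2,2)-split
Jacobian (extra involution). -/
def J30 (J2 J4 J6 J10 : ℤ) : ℤ :=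
  41472 * J10 * J4 ^ 5 + 159 * J4 ^ 6 * J2 ^ 3 - 236196 * J10 ^ 2 * J2 ^ 5
    - 80 * J4 ^ 7 * J2 + 104976000 * J10 ^ 2 * J2 ^ 2 * J6
    - 1728 * J4 ^ 5 * J2 ^ 2 * J6 + 6048 * J4 ^ 4 * J2 * J6 ^ 2
    - 9331200 * J10 * J4 ^ 2 * J6 ^ 2 - 2099520000 * J10 ^ 2 * J4 * J6
    + 12 * J2 ^ 6 * J4 ^ 3 * J6 - 54 * J2 ^ 5 * J4 ^ 2 * J6 ^ 2
    + 108 * J2 ^ 4 * J4 * J6 ^ 3 + 1332 * J2 ^ 4 * J4 ^ 4 * J6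
    - 8910 * J2 ^ 3 * J4 ^ 3 * J6 ^ 2 + 29376 * J2 ^ 2 * J4 ^ 2 * J6 ^ 3
    - 47952 * J2 * J4 * J6 ^ 4 - J2 ^ 7 * J4 ^ 4 - 81 * J2 ^ 3 * J6 ^ 4
    - 78 * J2 ^ 5 * J4 ^ 5 + 384 * J4 ^ 6 * J6 - 6912 * J4 ^ 3 * J6 ^ 3
    + 507384000 * J10 ^ 2 * J4 ^ 2 * J2 - 19245600 * J10 ^ 2 * J4 * J2 ^ 3
    - 592272 * J10 * J4 ^ 4 * J2 ^ 2 + 77436 * J10 * J4 ^ 3 * J2 ^ 4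
    + 4743360 * J10 * J4 ^ 3 * J2 * J6 - 870912 * J10 * J4 ^ 2 * J2 ^ 3 * J6
    + 3090960 * J10 * J4 * J2 ^ 2 * J6 ^ 2 - 5832 * J10 * J2 ^ 5 * J4 * J6
    - 125971200000 * J10 ^ 3 + 31104 * J6 ^ 5 + 972 * J10 * J2 ^ 6 * J4 ^ 2
    + 8748 * J10 * J2 ^ 4 * J6 ^ 2 - 3499200 * J10 * J2 * J6 ^ 3

def K2 (a b c : ℤ) : ℤ :=
  -236196*(a*a*a*a*a) + 104976000*(a*a)*c - 2099520000*b*c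
    + 507384000*(b*b)*a - 19245600*b*(a*a*a)

def K1 (a b c : ℤ) : ℤ :=
  41472*(b*b*b*b*b) - 9331200*(b*b)*(c*c) - 592272*(b*b*b*b)*(a*a)
    + 77436*(b*b*b)*(a*a*a*a) + 4743360*(b*b*b)*a*c - 870912*(b*b)*(a*a*a)*c
    + 3090960*b*(a*a)*(c*c) - 5832*(a*a*a*a*a)*b*c + 972*(a*a*a*a*a*a)*(b*b)
    + 8748*(a*a*a*a)*(c*c) - 3499200*a*(c*c*c)

def K0 (a b c : ℤ) : ℤ :=
  159*(b*b*b*b*b*b)*(a*a*a) - 80*(b*b*b*b*b*b*b)*a - 1728*(b*b*b*b*b)*(a*a)*c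
    + 6048*(b*b*b*b)*a*(c*c) + 12*(a*a*a*a*a*a)*(b*b*b)*c
    - 54*(a*a*a*a*a)*(b*b)*(c*c) + 108*(a*a*a*a)*b*(c*c*c)
    + 1332*(a*a*a*a)*(b*b*b*b)*c - 8910*(a*a*a)*(b*b*b)*(c*c)
    + 29376*(a*a)*(b*b)*(c*c*c) - 47952*a*b*(c*c*c*c) - (a*a*a*a*a*a*a)*(b*b*b*b)
    - 81*(a*a*a)*(c*c*c*c) - 78*(a*a*a*a*a)*(b*b*b*b*b) + 384*(b*b*b*b*b*b)*c
    - 6912*(b*b*b)*(c*c*c) + 31104*(c*c*c*c*c)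


def evalCubic (k0 k1 k2 d : ℤ) : ℤ :=
  (((-125971200000) * d + k2) * d + k1) * d + k0

theorem evalCubic_eq (a b c d : ℤ) :
    evalCubic (K0 a b c) (K1 a b c) (K2 a b c) d = J30 a b c d := by
  simp only [evalCubic, K0, K1, K2, J30]; ring

def force (k : ℤ) (f : ℤ → Bool) : Bool :=
  match k with
  | .ofNat n => f (.ofNat n)
  | .negSucc n => f (.negSucc n)

theorem force_eq (k : ℤ) (f : ℤ → Bool) : force k f = f k := by
  cases k <;> rfl

/-- the check for a single `(a,b,c)`: `d = ±1` explicitly, plus a coefficient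
bound that rules out all `|d| ≥ 2`. -/
def checkABC (k0 k1 k2 : ℤ) : Bool :=
  (evalCubic k0 k1 k2 1 != 0) && (evalCubic k0 k1 k2 (-1) != 0)
    && (k2.natAbs * 4 + k1.natAbs * 2 + k0.natAbs < 1007769600000 : Bool)

theorem abs_eq_natAbs' (k : ℤ) : |k| = (k.natAbs : ℤ) := by
  exact_mod_cast (Int.abs_eq_natAbs k)

theorem checkABC_spec (k0 k1 k2 : ℤ) (h : checkABC k0 k1 k2 = true) :
    ∀ d : ℤ, d ≠ 0 → evalCubic k0 k1 k2 d ≠ 0 := by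
  rw [checkABC, Bool.and_eq_true, Bool.and_eq_true] at h
  obtain ⟨⟨h1, h2⟩, h3⟩ := h
  rw [bne_iff_ne] at h1 h2
  rw [decide_eq_true_eq] at h3
  intro d hd
  have hb : |k2| * 4 + |k1| * 2 + |k0| < 1007769600000 := by
    rw [abs_eq_natAbs' k0, abs_eq_natAbs' k1, abs_eq_natAbs' k2]
    exact_mod_cast h3
  rcases eq_or_lt_of_le (Int.one_le_abs hd) with habs | habs
  · rcases abs_eq (by norm_num : (0:ℤ) ≤ 1) |>.mp habs.symm with rfl | rfl
    · exact h1
    · exact h2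
  · -- |d| ≥ 2
    have ht : 2 ≤ |d| := habs
    intro hzero
    have heq : k2 * d ^ 2 + k1 * d + k0 = 125971200000 * d ^ 3 := by
      have : evalCubic k0 k1 k2 d = k2 * d ^ 2 + k1 * d + k0 - 125971200000 * d ^ 3 := by
        simp only [evalCubic]; ring
      rw [this] at hzero; linarith
    have habs2 : |k2 * d ^ 2 + k1 * d + k0| = 125971200000 * |d| ^ 3 := by
      rw [heq, abs_mul, abs_pow]; norm_num
    have htri : |k2 * d ^ 2 + k1 * d + k0| ≤ |k2| * |d| ^ 2 + |k1| * |d| + |k0| := by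
      calc |k2 * d ^ 2 + k1 * d + k0| ≤ |k2 * d ^ 2 + k1 * d| + |k0| := abs_add_le _ _
        _ ≤ |k2 * d ^ 2| + |k1 * d| + |k0| := by linarith [abs_add_le (k2 * d ^ 2) (k1 * d)]
        _ = |k2| * |d| ^ 2 + |k1| * |d| + |k0| := by rw [abs_mul, abs_mul, abs_pow]
    set t := |d| with htdef
    have hB : 0 ≤ |k2| := abs_nonneg _
    have hC : 0 ≤ |k1| := abs_nonneg _
    have hE : 0 ≤ |k0| := abs_nonneg _
    have key : |k2| * t ^ 2 + |k1| * t + |k0| < 125971200000 * t ^ 3 := by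
      have h2t : (0:ℤ) ≤ t - 2 := by linarith
      have e1 : 0 ≤ |k2| * t ^ 2 * (t - 2) :=
        mul_nonneg (mul_nonneg hB (sq_nonneg t)) h2t
      have e2 : 0 ≤ |k1| * t * ((t - 2) * (t + 2)) :=
        mul_nonneg (mul_nonneg hC (by linarith)) (mul_nonneg h2t (by linarith))
      have e3 : 0 ≤ |k0| * ((t - 2) * (t ^ 2 + 2 * t + 4)) :=
        mul_nonneg hE (mul_nonneg h2t (by nlinarith [sq_nonneg (t + 1)]))
      have ht3 : (0:ℤ) < t ^ 3 := by positivity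
      have hfin : (|k2| * 4 + |k1| * 2 + |k0|) * t ^ 3 < 1007769600000 * t ^ 3 :=
        mul_lt_mul_of_pos_right hb ht3
      nlinarith [e1, e2, e3, hfin]
    linarith [habs2 ▸ htri]

def checkC (a b : ℤ) (m : Nat) : Bool :=
  Nat.rec true (fun n ih =>
      (force ((n : ℤ) - 11) fun c =>
        force (K0 a b c) fun k0 => force (K1 a b c) fun k1 => force (K2 a b c) fun k2 =>
          checkABC k0 k1 k2)
        && ih) m

def checkB (a : ℤ) (m : Nat) : Bool :=
  Nat.rec true (fun n ih => checkC a ((n : ℤ) - 5) 23 && ih) m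

def checkA (m : Nat) : Bool :=
  Nat.rec true (fun n ih => checkB ((n : ℤ) - 2) 11 && ih) m

theorem checkC_spec (a b : ℤ) :
    ∀ n : Nat, checkC a b n = true →
      ∀ c : ℤ, -11 ≤ c → c + 12 ≤ (n : ℤ) →
        ∀ d : ℤ, d ≠ 0 → J30 a b c d ≠ 0 := by
  intro n
  induction n with
  | zero => intro _ c h1 h2; omega
  | succ n ih =>
      intro h c h1 h2 d hd
      have hrw : checkC a b (n+1) = ((force ((n : ℤ) - 11) fun c =>
          force (K0 a b c) fun k0 => force (K1 a b c) fun k1 => force (K2 a b c) fun k2 =>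
            checkABC k0 k1 k2) && checkC a b n) := rfl
      rw [hrw, force_eq, Bool.and_eq_true] at h
      obtain ⟨hD, hrest⟩ := h
      rw [force_eq, force_eq, force_eq] at hD
      by_cases hc : c + 12 ≤ (n : ℤ)
      · exact ih hrest c h1 hc d hd
      · have hc' : c = (n : ℤ) - 11 := by push_cast at *; omega
        subst hc'
        have := checkABC_spec _ _ _ hD d hd
        rwa [evalCubic_eq] at this

theorem checkB_spec (a : ℤ) :
    ∀ n : Nat, checkB a n = true →
      ∀ b : ℤ, -5 ≤ b → b + 6 ≤ (n : ℤ) →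
        ∀ c : ℤ, |c| ≤ 11 → ∀ d : ℤ, d ≠ 0 → J30 a b c d ≠ 0 := by
  intro n
  induction n with
  | zero => intro _ b h1 h2; omega
  | succ n ih =>
      intro h b h1 h2 c hc d hd
      have hrw : checkB a (n+1) = (checkC a ((n : ℤ) - 5) 23 && checkB a n) := rfl
      rw [hrw, Bool.and_eq_true] at h
      obtain ⟨hC, hrest⟩ := h
      by_cases hb : b + 6 ≤ (n : ℤ)
      · exact ih hrest b h1 hb c hc d hd
      · have hb' : b = (n : ℤ) - 5 := by push_cast at *; omega
        subst hb'
        rcases abs_le.mp hc with ⟨hcl, hcr⟩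
        exact checkC_spec a _ 23 hC c hcl (by push_cast; omega) d hd

theorem checkA_spec :
    ∀ n : Nat, checkA n = true →
      ∀ a : ℤ, -2 ≤ a → a + 3 ≤ (n : ℤ) →
        ∀ b : ℤ, |b| ≤ 5 → ∀ c : ℤ, |c| ≤ 11 →
          ∀ d : ℤ, d ≠ 0 → J30 a b c d ≠ 0 := by
  intro n
  induction n with
  | zero => intro _ a h1 h2; omega
  | succ n ih =>
      intro h a h1 h2 b hb c hc d hd
      have hrw : checkA (n+1) = (checkB ((n : ℤ) - 2) 11 && checkA n) := rfl
      rw [hrw, Bool.and_eq_true] at h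
      obtain ⟨hB, hrest⟩ := h
      by_cases haa : a + 3 ≤ (n : ℤ)
      · exact ih hrest a h1 haa b hb c hc d hd
      · have ha' : a = (n : ℤ) - 2 := by push_cast at *; omega
        subst ha'
        rcases abs_le.mp hb with ⟨hbl, hbr⟩
        exact checkB_spec _ 11 hB b hbl (by push_cast; omega) c hc d hd

set_option maxRecDepth 100000 in
set_option maxHeartbeats 4000000 in
theorem checkA_true : checkA 5 = true := by decide

/-- for all integers `a, b, c, d` with `d ≠ 0`, `|a| ≤ 2`,
`|b| ≤ 5`, `|c| ≤ 11`, `|d| ≤ 57`, one has `J30 a b c d ≠ 0`; i.e. there are no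
rational points of the locus `L₂` of weighted height `< 3/2`. -/
theorem stmt_5 (a b c d : ℤ) (hd : d ≠ 0)
    (ha : |a| ≤ 2) (hb : |b| ≤ 5) (hc : |c| ≤ 11) (hd' : |d| ≤ 57) :
    J30 a b c d ≠ 0 := by
  rcases abs_le.mp ha with ⟨hal, har⟩
  exact checkA_spec 5 checkA_true a hal (by omega) b hb c hc d hd
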